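/- Let k ∈ ℤ, N, D ∈ ℕ with gcd(D, N) = 1, ψ a Dirichlet character mod N, and χ a Dirichlet character mod D. Let f : ℍ → ℂ satisfy f|_kγ = ψ(d) f for all γ = (a b; c d) ∈ Γ₀(N), and set g := f|_k W_N. Define the twists f_χ(z) := Σ_{u mod D} χ̄(u) f((z+u)/D) and g_χ̄(z) := Σ_{u mod D} χ(u) g((z+u)/D). Then f_χ|_k W_N = χ(−N) ψ(D) g_χ̄. -/

import Mathlib

open MeasureTheory Set

noncomputable section

/-- The Laplace transform of a complex-valued test function, at a real parameter. -/
def laplaceT (φ : ℝ → ℂ) (s : ℝ) : ℂ :=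
  ∫ t in Ioi (0 : ℝ), (Real.exp (-(s * t)) : ℂ) * φ t

/-- The Laplace transform of a real-valued function, at a real parameter. -/
def laplaceR (φ : ℝ → ℝ) (s : ℝ) : ℝ :=
  ∫ t in Ioi (0 : ℝ), Real.exp (-(s * t)) * φ t

/-- The incomplete Gamma function `Γ(r, x) = ∫_x^∞ e^{-t} t^{r-1} dt`. -/
def incGamma (r x : ℝ) : ℝ :=
  ∫ t in Ioi x, Real.exp (-t) * t ^ (r - 1)

/-- The test function `φ_m(x) = x^{m-1} φ(x)` for an integer parameter `m`. -/
def phiPow (m : ℤ) (φ : ℝ → ℂ) (x : ℝ) : ℂ :=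
  ((x ^ (m - 1) : ℝ) : ℂ) * φ x

/-- The test function `φ_s(x) = x^{s-1} φ(x)` for a complex parameter `s`. -/
def phiPowC (s : ℂ) (φ : ℝ → ℂ) (x : ℝ) : ℂ :=
  (x : ℂ) ^ (s - 1) * φ x

/-- The Fourier-type series
`f(z) = Σ_{n} a(n) e^{2πinz/M} + Σ_{n} b(n) Γ(1-k, -4πn y/M) e^{2πinz/M}`
defining (the expansion of) a harmonic Maass form of weight `k`. -/
def maassSeries (k : ℤ) (M : ℕ) (a b : ℤ → ℂ) (z : ℂ) : ℂ :=
  (∑' n : ℤ, a n * Complex.exp (2 * (Real.pi : ℂ) * Complex.I * (n : ℂ) * z / (M : ℂ)))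
  + ∑' n : ℤ, b n * ((incGamma (1 - (k : ℝ)) (-4 * Real.pi * (n : ℝ) * z.im / (M : ℝ)) : ℝ) : ℂ)
      * Complex.exp (2 * (Real.pi : ℂ) * Complex.I * (n : ℂ) * z / (M : ℂ))

/-- The L-series `L_f(φ)` of a harmonic Maass form with expansion coefficients `a`, `b`
(with denominator `M`). -/
def Lser (k : ℤ) (M : ℕ) (a b : ℤ → ℂ) (φ : ℝ → ℂ) : ℂ :=
  (∑' n : ℤ, a n * laplaceT φ (2 * Real.pi * (n : ℝ) / (M : ℝ)))
  + ∑' n : ℤ, b n * (((-4 * Real.pi * (n : ℝ) / (M : ℝ)) ^ (1 - k) : ℝ) : ℂ)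
      * ∫ t in Ioi (0 : ℝ),
          laplaceT (phiPow (2 - k) φ) (-2 * Real.pi * (n : ℝ) * (2 * t + 1) / (M : ℝ))
            * (((1 + t) ^ (-k) : ℝ) : ℂ)

/-- The L-series `L_{δ_k f}(φ)` attached to `δ_k f`. -/
def LdSer (k : ℤ) (M : ℕ) (a b : ℤ → ℂ) (φ : ℝ → ℂ) : ℂ :=
  ((k : ℂ) / 2) * Lser k M a b φ
  - (2 * (Real.pi : ℂ) / (M : ℂ)) *
      ∑' n : ℤ, (n : ℂ) * a n * laplaceT (phiPow 2 φ) (2 * Real.pi * (n : ℝ) / (M : ℝ))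
  - (2 * (Real.pi : ℂ) / (M : ℂ)) *
      ∑' n : ℤ, (n : ℂ) * b n * (((-4 * Real.pi * (n : ℝ) / (M : ℝ)) ^ (1 - k) : ℝ) : ℂ)
        * ∫ t in Ioi (0 : ℝ),
            laplaceT (phiPow (3 - k) φ) (-2 * Real.pi * (n : ℝ) * (2 * t + 1) / (M : ℝ))
              * (((1 + t) ^ (-k) : ℝ) : ℂ)

/-- The L-series with the complex-power test function `φ_s`: `L(s, f, φ) = L_f(φ_s)`. -/
def LserS (k : ℤ) (M : ℕ) (a b : ℤ → ℂ) (φ : ℝ → ℂ) (s : ℂ) : ℂ :=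
  Lser k M a b (phiPowC s φ)

/-- Partial derivative in the direction of the real axis. -/
def dxOp (f : ℂ → ℂ) (z : ℂ) : ℂ := fderiv ℝ f z 1

/-- Partial derivative in the direction of the imaginary axis. -/
def dyOp (f : ℂ → ℂ) (z : ℂ) : ℂ := fderiv ℝ f z Complex.I

/-- The Wirtinger derivative `∂f/∂z̄ = (∂f/∂x + i ∂f/∂y)/2`. -/
def dzbarOp (f : ℂ → ℂ) (z : ℂ) : ℂ := (dxOp f z + Complex.I * dyOp f z) / 2

/-- The Wirtinger derivative `∂f/∂z = (∂f/∂x - i ∂f/∂y)/2`. -/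
def dzOp (f : ℂ → ℂ) (z : ℂ) : ℂ := (dxOp f z - Complex.I * dyOp f z) / 2

/-- The weight `k` hyperbolic Laplacian `Δ_k = -4y² ∂²/(∂z ∂z̄) + 2iky ∂/∂z̄`. -/
def hypLap (k : ℤ) (f : ℂ → ℂ) (z : ℂ) : ℂ :=
  -4 * ((z.im : ℂ)) ^ 2 * dzOp (fun w => dzbarOp f w) z
    + 2 * Complex.I * (k : ℂ) * (z.im : ℂ) * dzbarOp f z

/-- The operator `δ_k f(z) = z ∂f/∂x(z) + (k/2) f(z)`. -/
def deltaOp (k : ℤ) (f : ℂ → ℂ) (z : ℂ) : ℂ := z * dxOp f z + ((k : ℂ) / 2) * f z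

/-- The shadow operator `ξ_w g = 2i y^w conj(∂g/∂z̄)`. -/
def xiOp (w : ℤ) (g : ℂ → ℂ) (z : ℂ) : ℂ :=
  2 * Complex.I * ((z.im ^ w : ℝ) : ℂ) * (starRingEnd ℂ) (dzbarOp g z)

abbrev SL2Z := Matrix.SpecialLinearGroup (Fin 2) ℤ

/-- Möbius action of `SL(2, ℤ)` on the upper half-plane (as a subset of `ℂ`). -/
def moeb (γ : SL2Z) (z : ℂ) : ℂ :=
  (((γ : Matrix (Fin 2) (Fin 2) ℤ) 0 0 : ℂ) * z + ((γ : Matrix (Fin 2) (Fin 2) ℤ) 0 1 : ℂ)) /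
    (((γ : Matrix (Fin 2) (Fin 2) ℤ) 1 0 : ℂ) * z + ((γ : Matrix (Fin 2) (Fin 2) ℤ) 1 1 : ℂ))

/-- The automorphy factor `j(γ, z) = cz + d`. -/
def jfac (γ : SL2Z) (z : ℂ) : ℂ :=
  ((γ : Matrix (Fin 2) (Fin 2) ℤ) 1 0 : ℂ) * z + ((γ : Matrix (Fin 2) (Fin 2) ℤ) 1 1 : ℂ)

/-- The Fricke involution: `(f|_k W_N)(z) = (√N z)^{-k} f(-1/(Nz))`. -/
def fricke (k : ℤ) (N : ℕ) (f : ℂ → ℂ) (z : ℂ) : ℂ :=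
  ((Real.sqrt N : ℂ) * z) ^ (-k) * f (-1 / ((N : ℂ) * z))

/-- The action of `W_N` on test functions: `(φ|_a W_N)(x) = (Nx)^{-a} φ(1/(Nx))`. -/
def testSlash (a : ℤ) (N : ℕ) (φ : ℝ → ℂ) (x : ℝ) : ℂ :=
  ((((N : ℝ) * x) ^ (-a) : ℝ) : ℂ) * φ (1 / ((N : ℝ) * x))

/-- A function `ℝ → ℂ` is piecewise smooth if it is smooth away from a finite set. -/
def IsPiecewiseSmooth (φ : ℝ → ℂ) : Prop :=
  ∃ S : Finset ℝ, ContDiffOn ℝ (⊤ : ℕ∞) φ ((Set.univ : Set ℝ) \ S)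

/-- A compactly supported piecewise smooth test function on `(0, ∞)`. -/
def IsTestFn (φ : ℝ → ℂ) : Prop :=
  IsPiecewiseSmooth φ ∧ HasCompactSupport φ ∧ tsupport φ ⊆ Ioi (0 : ℝ)

/-- A compactly supported smooth test function on `(0, ∞)`. -/
def IsSmoothTestFn (φ : ℝ → ℂ) : Prop :=
  ContDiff ℝ (⊤ : ℕ∞) φ ∧ HasCompactSupport φ ∧ tsupport φ ⊆ Ioi (0 : ℝ)

/-- A compactly supported piecewise smooth real-valued test function on `(0, ∞)`. -/
def IsTestFnR (φ : ℝ → ℝ) : Prop :=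
  (∃ S : Finset ℝ, ContDiffOn ℝ (⊤ : ℕ∞) φ ((Set.univ : Set ℝ) \ S)) ∧
    HasCompactSupport φ ∧ tsupport φ ⊆ Ioi (0 : ℝ)

/-- A compactly supported smooth real-valued test function on `(0, ∞)`. -/
def IsSmoothTestFnR (φ : ℝ → ℝ) : Prop :=
  ContDiff ℝ (⊤ : ℕ∞) φ ∧ HasCompactSupport φ ∧ tsupport φ ⊆ Ioi (0 : ℝ)

/-- The generalized Gauss sum `τ_χ(n) = Σ_{u mod D} χ(u) e^{2πinu/D}`. -/
def gaussTau (D : ℕ) (χ : DirichletCharacter ℂ D) (n : ℤ) : ℂ :=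
  ∑ u ∈ Finset.range D, χ ((u : ℕ) : ZMod D)
    * Complex.exp (2 * (Real.pi : ℂ) * Complex.I * (n : ℂ) * (u : ℂ) / (D : ℂ))

/-- The generalized Gauss sum of the conjugate character,
`τ_χ̄(n) = Σ_{u mod D} conj(χ(u)) e^{2πinu/D}`. -/
def conjTau (D : ℕ) (χ : DirichletCharacter ℂ D) (n : ℤ) : ℂ :=
  ∑ u ∈ Finset.range D, (starRingEnd ℂ) (χ ((u : ℕ) : ZMod D))
    * Complex.exp (2 * (Real.pi : ℂ) * Complex.I * (n : ℂ) * (u : ℂ) / (D : ℂ))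

/-- Harmonic Maass form of weight `k`, level `N` and character `ψ`:
smoothness, modularity with character, harmonicity, and at most
exponential decay after subtracting a polynomial in `e^{-2πiz}` at each cusp. -/
def IsHarmonicMaassForm (k : ℤ) (N : ℕ) (ψ : DirichletCharacter ℂ N) (f : ℂ → ℂ) : Prop :=
  ContDiffOn ℝ (⊤ : ℕ∞) f {z : ℂ | 0 < z.im} ∧
  (∀ γ ∈ CongruenceSubgroup.Gamma0 N, ∀ z : ℂ, 0 < z.im →
      f (moeb γ z)
        = ψ (((γ : Matrix (Fin 2) (Fin 2) ℤ) 1 1 : ℤ) : ZMod N) * jfac γ z ^ k * f z) ∧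
  (∀ z : ℂ, 0 < z.im → hypLap k f z = 0) ∧
  (∀ γ : SL2Z, ∃ (m : ℕ) (p : ℕ → ℂ) (ε A B : ℝ), 0 < ε ∧
      ∀ z : ℂ, 0 < z.im → B ≤ z.im →
        ‖jfac γ z ^ (-k) * f (moeb γ z)
            - ∑ j ∈ Finset.range m, p j * Complex.exp (-(2 * (Real.pi : ℂ) * Complex.I * (j : ℂ) * z))‖
          ≤ A * Real.exp (-(ε * z.im)))

/-- Harmonic Maass form with at most exponential growth at the cusps
(the space `H'_k(N, ψ)`). -/
def IsHarmonicMaassFormExpGrowth (k : ℤ) (N : ℕ) (ψ : DirichletCharacter ℂ N) (f : ℂ → ℂ) :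
    Prop :=
  ContDiffOn ℝ (⊤ : ℕ∞) f {z : ℂ | 0 < z.im} ∧
  (∀ γ ∈ CongruenceSubgroup.Gamma0 N, ∀ z : ℂ, 0 < z.im →
      f (moeb γ z)
        = ψ (((γ : Matrix (Fin 2) (Fin 2) ℤ) 1 1 : ℤ) : ZMod N) * jfac γ z ^ k * f z) ∧
  (∀ z : ℂ, 0 < z.im → hypLap k f z = 0) ∧
  (∀ γ : SL2Z, ∃ ε A B : ℝ, 0 < ε ∧
      ∀ z : ℂ, 0 < z.im → B ≤ z.im →
        ‖jfac γ z ^ (-k) * f (moeb γ z)‖ ≤ A * Real.exp (ε * z.im))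

/-- A holomorphic cusp form of weight `k` for `Γ₀(N)` with (multiplier given by) the
function `c` on `ZMod N` as character. -/
def IsCuspFormWithChar (k : ℤ) (N : ℕ) (c : ZMod N → ℂ) (f : ℂ → ℂ) : Prop :=
  DifferentiableOn ℂ f {z : ℂ | 0 < z.im} ∧
  (∀ γ ∈ CongruenceSubgroup.Gamma0 N, ∀ z : ℂ, 0 < z.im →
      f (moeb γ z)
        = c (((γ : Matrix (Fin 2) (Fin 2) ℤ) 1 1 : ℤ) : ZMod N) * jfac γ z ^ k * f z) ∧
  (∀ γ : SL2Z, ∃ ε A B : ℝ, 0 < ε ∧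
      ∀ z : ℂ, 0 < z.im → B ≤ z.im →
        ‖jfac γ z ^ (-k) * f (moeb γ z)‖ ≤ A * Real.exp (-(ε * z.im)))

/-- The Whittaker hypergeometric function
`M_{κ,μ}(x) = e^{-x/2} x^{μ+1/2} Σ_{m≥0} ((μ-κ+1/2)_m / ((2μ+1)_m m!)) x^m`. -/
def whittakerM (κ μ x : ℝ) : ℝ :=
  Real.exp (-x / 2) * x ^ (μ + 1 / 2) *
    ∑' m : ℕ, ((ascPochhammer ℝ m).eval (μ - κ + 1 / 2)) /
        (((ascPochhammer ℝ m).eval (2 * μ + 1)) * (m.factorial : ℝ)) * x ^ m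

/-- The convergence condition defining the space `𝓕_f` of admissible test functions:
`Σ |a(n)| (ℒ|φ|)(2πn/M) + Σ_{n<0} |b(n)| (4π|n|/M)^{1-k} ∫₀^∞ (ℒ|φ_{2-k}|)(-2πn(2t+1)/M) (1+t)^{-k} dt < ∞`. -/
def FfCond (k : ℤ) (M : ℕ) (a b : ℤ → ℂ) (φ : ℝ → ℂ) : Prop :=
  Summable (fun n : ℤ => ‖a n‖ * laplaceR (fun t => ‖φ t‖) (2 * Real.pi * (n : ℝ) / (M : ℝ))) ∧
  Summable (fun n : ℤ => ‖b n‖ * ((4 * Real.pi * |(n : ℝ)| / (M : ℝ)) ^ (1 - k)) *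
    ∫ t in Ioi (0 : ℝ),
      laplaceR (fun x => x ^ (1 - k) * ‖φ x‖) (-2 * Real.pi * (n : ℝ) * (2 * t + 1) / (M : ℝ))
        * (1 + t) ^ (-k))

/-- The analogous convergence condition for the L-series of `δ_k f`. -/
def FdCond (k : ℤ) (M : ℕ) (a b : ℤ → ℂ) (φ : ℝ → ℂ) : Prop :=
  Summable (fun n : ℤ =>
    ‖a n‖ * |(n : ℝ)| * laplaceR (fun t => t * ‖φ t‖) (2 * Real.pi * (n : ℝ) / (M : ℝ))) ∧
  Summable (fun n : ℤ => ‖b n‖ * |(n : ℝ)| * ((4 * Real.pi * |(n : ℝ)| / (M : ℝ)) ^ (1 - k)) *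
    ∫ t in Ioi (0 : ℝ),
      laplaceR (fun x => x ^ (2 - k) * ‖φ x‖) (-2 * Real.pi * (n : ℝ) * (2 * t + 1) / (M : ℝ))
        * (1 + t) ^ (-k))

open scoped Classical
noncomputable def twistMap (N D : ℕ) (u : ℕ) : ℕ :=
  if IsUnit ((u : ZMod D)) then ((-((N : ZMod D) * (u : ZMod D)))⁻¹).val else u

lemma twistMap_lt (N D : ℕ) [NeZero D] (u : ℕ) (hu : u < D) : twistMap N D u < D := by
  unfold twistMap; split
  · exact ZMod.val_lt _
  · exact hu

lemma twistMap_unit (N D : ℕ) [NeZero D] (u : ℕ)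
    (huu : IsUnit ((u : ZMod D))) : ((twistMap N D u : ℕ) : ZMod D)
      = (-((N : ZMod D) * (u : ZMod D)))⁻¹ := by
  unfold twistMap
  rw [if_pos huu, ZMod.natCast_val, ZMod.cast_id]

lemma twistMap_not_unit (N D : ℕ) (u : ℕ) (huu : ¬ IsUnit ((u : ZMod D))) :
    twistMap N D u = u := by
  unfold twistMap; rw [if_neg huu]

lemma neg_mul_inv_eq (N D : ℕ) (u : ℕ) (hNu : IsUnit ((N : ZMod D)))
    (huu : IsUnit ((u : ZMod D))) :
    -((N : ZMod D) * (-((N : ZMod D) * (u : ZMod D)))⁻¹) = ((u : ZMod D))⁻¹ := by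
  have hXu : IsUnit (-((N : ZMod D) * (u : ZMod D))) := (hNu.mul huu).neg
  symm
  apply ZMod.inv_eq_of_mul_eq_one
  calc (u : ZMod D) * (-((N : ZMod D) * (-((N : ZMod D) * (u : ZMod D)))⁻¹))
      = (-((N : ZMod D) * u)) * (-((N : ZMod D) * (u : ZMod D)))⁻¹ := by ring
    _ = 1 := ZMod.mul_inv_of_unit _ hXu

lemma twistMap_invol (N D : ℕ) [NeZero D] (hNu : IsUnit ((N : ZMod D))) (u : ℕ) (hu : u < D) :
    twistMap N D (twistMap N D u) = u := by
  by_cases huu : IsUnit ((u : ZMod D))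
  · have hXu : IsUnit (-((N : ZMod D) * (u : ZMod D))) := (hNu.mul huu).neg
    have hXiu : IsUnit ((-((N : ZMod D) * (u : ZMod D)))⁻¹) :=
      IsUnit.of_mul_eq_one _ (ZMod.inv_mul_of_unit _ hXu)
    have hvD := twistMap_unit N D u huu
    obtain ⟨v, hv⟩ : ∃ v, twistMap N D u = v := ⟨_, rfl⟩
    rw [hv] at hvD ⊢
    have hvu : IsUnit ((v : ℕ) : ZMod D) := by rw [hvD]; exact hXiu
    unfold twistMap
    rw [if_pos hvu, hvD, neg_mul_inv_eq N D u hNu huu,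
      ZMod.inv_eq_of_mul_eq_one D _ _ (ZMod.inv_mul_of_unit _ huu),
      ZMod.val_cast_of_lt hu]
  · rw [twistMap_not_unit N D u huu, twistMap_not_unit N D u huu]

private lemma conj_char' {D : ℕ} (χ : DirichletCharacter ℂ D) {u : ZMod D} (hu : IsUnit u) :
    (starRingEnd ℂ) (χ u) = χ u⁻¹ := by
  have h1 : χ u * χ u⁻¹ = 1 := by
    rw [← map_mul, ZMod.mul_inv_of_unit u hu, map_one]
  have h2 : ‖χ u‖ = 1 := by
    have := χ.unit_norm_eq_one hu.unit
    simpa using this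
  rw [← RCLike.inv_eq_conj h2]
  exact inv_eq_of_mul_eq_one_right h1
private lemma keyStep (k : ℤ) (N D : ℕ) [NeZero N] [NeZero D]
    (ψ : DirichletCharacter ℂ N) (f : ℂ → ℂ)
    (hmod : ∀ γ ∈ CongruenceSubgroup.Gamma0 N, ∀ z : ℂ, 0 < z.im →
      f (moeb γ z) = ψ (((γ : Matrix (Fin 2) (Fin 2) ℤ) 1 1 : ℤ) : ZMod N) * jfac γ z ^ k * f z)
    (z : ℂ) (hz : 0 < z.im) (u v : ℕ) (huv : D ∣ u * N * v + 1) :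
    f ((-1/((N:ℂ)*z) + (u:ℂ))/(D:ℂ))
      = ψ (D : ZMod N) * ((D:ℂ)*z/(z+(v:ℂ))) ^ k * f (-(D:ℂ)/((N:ℂ)*(z+(v:ℂ)))) := by
  obtain ⟨a, ha⟩ := huv
  have ha' : (u:ℤ)*N*v + 1 = D*a := by exact_mod_cast ha
  have hdet : (!![(a:ℤ), (u:ℤ); ((N:ℤ)*v), (D:ℤ)]).det = 1 := by
    simp [Matrix.det_fin_two_of]; linarith
  set γ : SL2Z := ⟨_, hdet⟩ with hγdef
  have hγ : γ ∈ CongruenceSubgroup.Gamma0 N := by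
    rw [CongruenceSubgroup.Gamma0_mem]
    show (((N:ℤ)*v : ℤ) : ZMod N) = 0
    push_cast
    simp
  have hNc : (N:ℂ) ≠ 0 := Nat.cast_ne_zero.mpr (NeZero.ne N)
  have hDc : (D:ℂ) ≠ 0 := Nat.cast_ne_zero.mpr (NeZero.ne D)
  have hz0 : z ≠ 0 := fun h => by simp [h] at hz
  have hzv : z + (v:ℂ) ≠ 0 := fun h => by
    have : (z + (v:ℂ)).im = 0 := by rw [h]; simp
    simp at this; linarith
  have hwne : (N:ℂ)*(z+(v:ℂ)) ≠ 0 := mul_ne_zero hNc hzv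
  set w : ℂ := -(D:ℂ)/((N:ℂ)*(z+(v:ℂ))) with hwdef
  have hw : 0 < w.im := by
    rw [hwdef, Complex.div_im]
    have h1 : ((N:ℂ)*(z+(v:ℂ))).im = N * z.im := by simp
    have h2 : (-(D:ℂ)).im = 0 := by simp
    have h3 : (-(D:ℂ)).re = -(D:ℝ) := by simp
    rw [h1, h2, h3]
    have h4 : 0 < Complex.normSq ((N:ℂ)*(z+(v:ℂ))) := Complex.normSq_pos.mpr hwne
    have h5 : (0:ℝ) < N := by exact_mod_cast Nat.pos_of_ne_zero (NeZero.ne N)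
    have h6 : (0:ℝ) < D := by exact_mod_cast Nat.pos_of_ne_zero (NeZero.ne D)
    have : 0 - -(D:ℝ) * (N * z.im) / Complex.normSq ((N:ℂ)*(z+(v:ℂ)))
        = D * (N * z.im) / Complex.normSq ((N:ℂ)*(z+(v:ℂ))) := by ring
    rw [zero_mul, zero_div, this]
    positivity
  have hjf : jfac γ w = (D:ℂ)*z/(z+(v:ℂ)) := by
    show ((((N:ℤ)*v : ℤ)):ℂ) * w + (((D:ℤ)):ℂ) = _
    rw [hwdef]
    push_cast
    field_simp
    ring
  have hmo : moeb γ w = (-1/((N:ℂ)*z) + (u:ℂ))/(D:ℂ) := by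
    show (((a:ℤ):ℂ) * w + ((u:ℤ):ℂ)) / ((((N:ℤ)*v:ℤ):ℂ) * w + ((D:ℤ):ℂ)) = _
    have hden : (((N:ℤ)*v:ℤ):ℂ) * w + ((D:ℤ):ℂ) = (D:ℂ)*z/(z+(v:ℂ)) := hjf
    rw [hden, hwdef]
    have haC : (u:ℂ)*N*v + 1 = D*a := by exact_mod_cast ha
    push_cast
    rw [div_eq_div_iff (div_ne_zero (mul_ne_zero hDc hz0) hzv) hDc]
    field_simp
    ring_nf
    linear_combination haC
  have H := hmod γ hγ w hw
  rw [hmo, hjf] at H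
  have hent : ((((γ : Matrix (Fin 2) (Fin 2) ℤ) 1 1 : ℤ)) : ZMod N) = (D : ZMod N) := by
    show (((D:ℤ)) : ZMod N) = _
    push_cast
    rfl
  rw [hent] at H
  exact H


/-- equation (3.17): behaviour of twists under the Fricke involution. -/
theorem statement12
    (k : ℤ) (N D : ℕ) [NeZero N] [NeZero D] (hDN : Nat.Coprime D N)
    (ψ : DirichletCharacter ℂ N) (χ : DirichletCharacter ℂ D)
    (f : ℂ → ℂ)
    (hmod : ∀ γ ∈ CongruenceSubgroup.Gamma0 N, ∀ z : ℂ, 0 < z.im →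
      f (moeb γ z)
        = ψ (((γ : Matrix (Fin 2) (Fin 2) ℤ) 1 1 : ℤ) : ZMod N) * jfac γ z ^ k * f z)
    (fχ gχ : ℂ → ℂ)
    (hfχ : ∀ z : ℂ, fχ z = ∑ u ∈ Finset.range D,
      (starRingEnd ℂ) (χ ((u : ℕ) : ZMod D)) * f ((z + (u : ℂ)) / (D : ℂ)))
    (hgχ : ∀ z : ℂ, gχ z = ∑ u ∈ Finset.range D,
      χ ((u : ℕ) : ZMod D) * fricke k N f ((z + (u : ℂ)) / (D : ℂ))) :
    ∀ z : ℂ, 0 < z.im →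
      fricke k N fχ z = χ ((-(N : ℤ) : ZMod D)) * ψ ((D : ZMod N)) * gχ z := by
  intro z hz
  have hNc : (N:ℂ) ≠ 0 := Nat.cast_ne_zero.mpr (NeZero.ne N)
  have hDc : (D:ℂ) ≠ 0 := Nat.cast_ne_zero.mpr (NeZero.ne D)
  have hz0 : z ≠ 0 := fun h => by simp [h] at hz
  have hNu : IsUnit ((N : ZMod D)) := (ZMod.isUnit_iff_coprime N D).mpr hDN.symm
  have hzv : ∀ v : ℕ, z + (v:ℂ) ≠ 0 := fun v h => by
    have : (z + (v:ℂ)).im = 0 := by rw [h]; simp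
    simp at this; linarith
  show ((Real.sqrt N : ℂ) * z) ^ (-k) * fχ (-1 / ((N : ℂ) * z)) = _
  rw [hfχ, hgχ, Finset.mul_sum, Finset.mul_sum]
  refine Finset.sum_nbij' (twistMap N D) (twistMap N D) ?_ ?_ ?_ ?_ ?_
  · intro u hu
    exact Finset.mem_range.mpr (twistMap_lt N D u (Finset.mem_range.mp hu))
  · intro u hu
    exact Finset.mem_range.mpr (twistMap_lt N D u (Finset.mem_range.mp hu))
  · intro u hu
    exact twistMap_invol N D hNu u (Finset.mem_range.mp hu)
  · intro u hu
    exact twistMap_invol N D hNu u (Finset.mem_range.mp hu)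
  · intro u hu
    by_cases huu : IsUnit ((u : ZMod D))
    · obtain ⟨v, hv⟩ : ∃ v, twistMap N D u = v := ⟨_, rfl⟩
      have hvD : ((v : ℕ) : ZMod D) = (-((N : ZMod D) * (u : ZMod D)))⁻¹ := by
        rw [← hv]; exact twistMap_unit N D u huu
      have hXu : IsUnit (-((N : ZMod D) * (u : ZMod D))) := (hNu.mul huu).neg
      have hzv' : z + (v:ℂ) ≠ 0 := hzv v
      have hdvd : D ∣ u * N * v + 1 := by
        rw [← ZMod.natCast_eq_zero_iff]
        push_cast
        rw [hvD]
        have h3 : (u : ZMod D) * N = -(-((N : ZMod D) * (u : ZMod D))) := by ring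
        rw [h3, neg_mul, ZMod.mul_inv_of_unit _ hXu]
        ring
      have hcoef : (starRingEnd ℂ) (χ ((u : ℕ) : ZMod D))
          = χ ((-(N : ℤ) : ZMod D)) * χ ((v : ℕ) : ZMod D) := by
        rw [conj_char' χ huu, hvD, ← map_mul]
        congr 1
        rw [← neg_mul_inv_eq N D u hNu huu]
        push_cast
        ring
      have hk := keyStep k N D ψ f hmod z hz u v hdvd
      have hpt : -1/((N:ℂ)*((z + (v:ℂ))/(D:ℂ))) = -(D:ℂ)/((N:ℂ)*(z+(v:ℂ))) := by
        field_simp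
      have hA : (D:ℂ)*z/(z+(v:ℂ)) ≠ 0 := div_ne_zero (mul_ne_zero hDc hz0) hzv'
      have hZ : ((Real.sqrt N : ℂ) * z) ^ (-k) * ((D:ℂ)*z/(z+(v:ℂ))) ^ k
          = ((Real.sqrt N : ℂ) * ((z + (v:ℂ))/(D:ℂ))) ^ (-k) := by
        have hmul : (Real.sqrt N : ℂ) * z
            = ((D:ℂ)*z/(z+(v:ℂ))) * ((Real.sqrt N : ℂ) * ((z + (v:ℂ))/(D:ℂ))) := by
          rw [mul_div_assoc', div_mul_div_comm, eq_div_iff (mul_ne_zero hzv' hDc)]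
          ring
        rw [hmul, mul_zpow]
        rw [mul_comm (((D:ℂ)*z/(z+(v:ℂ))) ^ (-k)) _, mul_assoc, ← zpow_add₀ hA,
          neg_add_cancel, zpow_zero, mul_one]
      rw [hv]
      show ((Real.sqrt N : ℂ) * z) ^ (-k) * _
        = _ * (_ * (((Real.sqrt N : ℂ) * ((z + (v:ℂ))/(D:ℂ))) ^ (-k)
          * f (-1 / ((N:ℂ) * ((z + (v:ℂ))/(D:ℂ))))))
      rw [hpt, hk, hcoef, ← hZ]
      ring
    · rw [twistMap_not_unit N D u huu, MulChar.map_nonunit χ huu]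
      simp
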